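/- arXiv:2505.05873 — 4 statements merged into one kernel-verified Lean document; each statement's English description precedes it below -/
import Mathlib

section
/- The Baxter numbers B_n = Σ_{k=1}^n (2/(n(n+1)^2)) C(n+1,k-1) C(n+1,k) C(n+1,k+1) satisfy the recurrence (n+4)(n+5) B_{n+2} = (7n^2+35n+40) B_{n+1} + 8n(n+1) B_n for all n ≥ 1. -/
open Finset

/-- The Baxter numbers. -/
def baxter (n : ℕ) : ℚ :=
  ∑ k ∈ Finset.Icc 1 n,
    2 / ((n : ℚ) * ((n : ℚ) + 1) ^ 2) * ((n + 1).choose (k - 1) : ℚ) *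
      ((n + 1).choose k : ℚ) * ((n + 1).choose (k + 1) : ℚ)

/-!
Creative telescoping. Up to the factor `2 / (m (m + 1)²)`, `B_m` is the sum of
`F m i = C(m+1, i) C(m+1, i+1) C(m+1, i+2)` over all `i`. Zeilberger's algorithm produces a
certificate `G n i` with
`2 (n+1)(n+2)(n+4)(n+5) F (n+2) i - 2 (7n²+35n+40)(n+3)² F (n+1) i - 16 (n+2)²(n+3)² F n i
  = G n i - G n (i-1)` (with `G n (-1) = 0`);
checking this identity is mechanical once every binomial coefficient is written as
`C(n+1, j)` times a rational function of `n` and `j`. Summing over `i` telescopes to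
`G n (n+1) = 0`, and clearing the denominators of the `B_m` gives the recurrence.
-/

namespace Nat

variable {K : Type*} [Field K] [CharZero K]

theorem cast_choose_succ_right_eq (m k : ℕ) :
    (m.choose (k + 1) : K) = m.choose k * (m - k) / (k + 1) := by
  rw [eq_div_iff (cast_add_one_ne_zero k)]
  rcases le_or_gt k m with h | h
  · have := congrArg (Nat.cast : ℕ → K) (choose_succ_right_eq m k)
    push_cast [cast_sub h] at this
    exact this
  · simp [choose_eq_zero_of_lt h, choose_eq_zero_of_lt (h.trans (lt_succ_self k))]

theorem cast_choose_succ_left_eq {m k : ℕ} (h : k ≤ m) :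
    ((m + 1).choose k : K) = m.choose k * (m + 1) / (m + 1 - k) := by
  have hk : ((m + 1 - k : ℕ) : K) ≠ 0 := by exact_mod_cast (by omega : m + 1 - k ≠ 0)
  push_cast [h.trans (le_succ m)] at hk
  rw [eq_div_iff hk]
  have := congrArg (Nat.cast : ℕ → K) (choose_mul_succ_eq m k)
  push_cast [cast_sub (h.trans (le_succ m))] at this
  exact this.symm

end Nat

namespace Baxter

open Nat

def summand (m i : ℕ) : ℚ :=
  (m + 1).choose i * (m + 1).choose (i + 1) * (m + 1).choose (i + 2)

theorem summand_eq_zero {m i : ℕ} (h : m ≤ i) : summand m i = 0 := by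
  simp [summand, choose_eq_zero_of_lt (by omega : m + 1 < i + 2)]

theorem mul_baxter_eq_sum_summand {m N : ℕ} (h : m ≤ N) :
    (m : ℚ) * (m + 1) ^ 2 * baxter m = 2 * ∑ i ∈ range N, summand m i := by
  rw [eventually_constant_sum (fun i hi => summand_eq_zero hi) h]
  rcases m.eq_zero_or_pos with rfl | hm
  · simp
  rw [baxter, ← Ico_add_one_right_eq_Icc, sum_Ico_eq_sum_range, Nat.add_sub_cancel, mul_sum,
    mul_sum]
  refine sum_congr rfl fun i _ => ?_
  have hm' : (m : ℚ) ≠ 0 := by positivity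
  rw [show 1 + i - 1 = i by omega, show 1 + i + 1 = i + 2 by omega, add_comm 1 i, summand]
  field_simp

def recurrenceTerm (n i : ℕ) : ℚ :=
  2 * ((n : ℚ) + 1) * (n + 2) * (n + 4) * (n + 5) * summand (n + 2) i
    - 2 * (7 * (n : ℚ) ^ 2 + 35 * n + 40) * (n + 3) ^ 2 * summand (n + 1) i
    - 16 * ((n : ℚ) + 2) ^ 2 * (n + 3) ^ 2 * summand n i

def certificate (n j : ℕ) : ℚ :=
  ((n : ℚ) + 2) ^ 2 * (n + 3) ^ 2 *
    (-8 * (n + 1).choose j * (n + 1).choose (j + 1) * (n + 1).choose (j + 2)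
      - (n + 4) * (n + 5) * (n + 1).choose j * (n + 1).choose (j + 1) * (n + 2).choose (j + 2)
      + 2 * (n + 1) * (n + 5) * (n + 1).choose j * (n + 2).choose (j + 1) * (n + 1).choose (j + 2)
      - (n + 1) * (n + 2) * (n + 2).choose j * (n + 1).choose (j + 1) * (n + 1).choose (j + 2))

theorem recurrenceTerm_zero (n : ℕ) : recurrenceTerm n 0 = certificate n 0 := by
  simp only [recurrenceTerm, certificate, summand, Nat.zero_add, choose_zero_right,
    choose_one_right, cast_choose_two]
  push_cast
  ring

theorem recurrenceTerm_succ {n j : ℕ} (hj : j ≤ n) :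
    recurrenceTerm n (j + 1) = certificate n (j + 1) - certificate n j := by
  simp only [recurrenceTerm, certificate, summand]
  rw [choose_succ_succ' (n + 2) j, choose_succ_succ' (n + 2) (j + 1),
    choose_succ_succ' (n + 2) (j + 2), choose_succ_succ' (n + 1) j,
    choose_succ_succ' (n + 1) (j + 1), choose_succ_succ' (n + 1) (j + 2)]
  push_cast
  rw [cast_choose_succ_left_eq (le_succ_of_le hj), cast_choose_succ_right_eq (n + 1) (j + 2),
    cast_choose_succ_right_eq (n + 1) (j + 1), cast_choose_succ_right_eq (n + 1) j]
  have hden : (n : ℚ) + 1 + 1 - j ≠ 0 := by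
    have hjq : (j : ℚ) ≤ n := by exact_mod_cast hj
    linarith
  push_cast
  field_simp
  ring

theorem certificate_succ_self (n : ℕ) : certificate n (n + 1) = 0 := by
  simp [certificate, choose_eq_zero_iff]

theorem sum_range_recurrenceTerm {n k : ℕ} (hk : k ≤ n + 1) :
    ∑ i ∈ range (k + 1), recurrenceTerm n i = certificate n k := by
  induction k with
  | zero => simp [recurrenceTerm_zero]
  | succ k ih =>
    rw [sum_range_succ, ih (by omega), recurrenceTerm_succ (by omega)]
    ring

end Baxter

open Baxter in
theorem baxter_recurrence_general (n : ℕ) :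
    ((n : ℚ) + 4) * ((n : ℚ) + 5) * baxter (n + 2) =
      (7 * (n : ℚ) ^ 2 + 35 * (n : ℚ) + 40) * baxter (n + 1) +
        8 * (n : ℚ) * ((n : ℚ) + 1) * baxter n := by
  have h₀ := mul_baxter_eq_sum_summand (m := n) (N := n + 2) (by omega)
  have h₁ := mul_baxter_eq_sum_summand (m := n + 1) (N := n + 2) (by omega)
  have h₂ := mul_baxter_eq_sum_summand (m := n + 2) (N := n + 2) le_rfl
  have hsum : ∑ i ∈ range (n + 2), recurrenceTerm n i = 0 := by
    rw [sum_range_recurrenceTerm le_rfl, certificate_succ_self]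
  simp only [recurrenceTerm, sum_sub_distrib, ← mul_sum] at hsum
  push_cast at h₁ h₂
  apply mul_left_cancel₀ (by positivity : ((n : ℚ) + 1) * (n + 2) ^ 2 * (n + 3) ^ 2 ≠ 0)
  linear_combination ((n : ℚ) + 1) * (n + 2) * (n + 4) * (n + 5) * h₂
    - (7 * (n : ℚ) ^ 2 + 35 * n + 40) * (n + 3) ^ 2 * h₁
    - 8 * ((n : ℚ) + 2) ^ 2 * (n + 3) ^ 2 * h₀ + hsum

theorem baxter_recurrence (n : ℕ) (hn : 1 ≤ n) :
    ((n : ℚ) + 4) * ((n : ℚ) + 5) * baxter (n + 2) =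
      (7 * (n : ℚ) ^ 2 + 35 * (n : ℚ) + 40) * baxter (n + 1) +
        8 * (n : ℚ) * ((n : ℚ) + 1) * baxter n :=
  baxter_recurrence_general n
end

section
/- For every positive integer n and every k with 1 ≤ k ≤ n, the number D_{n,k} = (2/(n(n+1)^2)) * C(n+1,k-1) * C(n+1,k) * C(n+1,k+1) is a positive integer. -/
set_option maxHeartbeats 1000000

open Finset

/-- The summands of the Baxter numbers. -/
def baxterD (n k : ℕ) : ℚ :=
  2 / ((n : ℚ) * ((n : ℚ) + 1) ^ 2) * ((n + 1).choose (k - 1) : ℚ) *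
    ((n + 1).choose k : ℚ) * ((n + 1).choose (k + 1) : ℚ)

def detZ (n k : ℕ) : ℤ :=
  ((n-1).choose (k-1) : ℤ) * ((n.choose k : ℤ) * ((n+1).choose (k+1)) - (n.choose (k+1) : ℤ) * ((n+1).choose k))
  - ((n-1).choose k : ℤ) * ((n.choose (k-1) : ℤ) * ((n+1).choose (k+1)) - (n.choose (k+1) : ℤ) * ((n+1).choose (k-1)))
  + ((n-1).choose (k+1) : ℤ) * ((n.choose (k-1) : ℤ) * ((n+1).choose k) - (n.choose k : ℤ) * ((n+1).choose (k-1)))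

lemma keyA (p : ℕ) : baxterD (p+1) (p+1) = ((detZ (p+1) (p+1) : ℤ) : ℚ) := by
  have hp : (p.factorial : ℚ) ≠ 0 := by exact_mod_cast (Nat.factorial_pos p).ne'
  have c5 : ((p:ℚ)+1) ≠ 0 := by positivity
  have c6 : ((p:ℚ)+2) ≠ 0 := by positivity
  unfold baxterD detZ
  rw [show p + 1 - 1 = p from rfl]
  rw [Nat.choose_eq_zero_of_lt (by omega : p < p+1), Nat.choose_eq_zero_of_lt (by omega : p < p+1+1),
      Nat.choose_eq_zero_of_lt (by omega : p+1 < p+1+1)]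
  rw [Nat.choose_self, Nat.choose_self, Nat.choose_self]
  push_cast
  rw [Nat.cast_choose ℚ (by omega : p ≤ p+1), show p+1-p = 1 by omega,
      Nat.cast_choose ℚ (by omega : p ≤ p+1+1), show p+1+1-p = 2 by omega,
      Nat.cast_choose ℚ (by omega : p+1 ≤ p+1+1), show p+1+1-(p+1) = 1 by omega]
  push_cast [Nat.factorial_succ, Nat.factorial]
  field_simp
  ring

lemma keyB (p : ℕ) : baxterD (p+2) (p+1) = ((detZ (p+2) (p+1) : ℤ) : ℚ) := by
  have hp : (p.factorial : ℚ) ≠ 0 := by exact_mod_cast (Nat.factorial_pos p).ne'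
  have c5 : ((p:ℚ)+1) ≠ 0 := by positivity
  have c6 : ((p:ℚ)+2) ≠ 0 := by positivity
  have c7 : ((p:ℚ)+3) ≠ 0 := by positivity
  unfold baxterD detZ
  rw [show p + 1 - 1 = p from rfl, show p + 2 - 1 = p + 1 from rfl]
  rw [Nat.choose_eq_zero_of_lt (by omega : p+1 < p+1+1)]
  push_cast
  rw [Nat.cast_choose ℚ (by omega : p ≤ p+1), show p+1-p = 1 by omega,
      Nat.cast_choose ℚ (by omega : p+1 ≤ p+1), show p+1-(p+1) = 0 by omega,
      Nat.cast_choose ℚ (by omega : p ≤ p+2), show p+2-p = 2 by omega,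
      Nat.cast_choose ℚ (by omega : p+1 ≤ p+2), show p+2-(p+1) = 1 by omega,
      Nat.cast_choose ℚ (by omega : p+1+1 ≤ p+2), show p+2-(p+1+1) = 0 by omega,
      Nat.cast_choose ℚ (by omega : p ≤ p+2+1), show p+2+1-p = 3 by omega,
      Nat.cast_choose ℚ (by omega : p+1 ≤ p+2+1), show p+2+1-(p+1) = 2 by omega,
      Nat.cast_choose ℚ (by omega : p+1+1 ≤ p+2+1), show p+2+1-(p+1+1) = 1 by omega]
  push_cast [Nat.factorial_succ, Nat.factorial]
  field_simp
  ring

lemma keyC (p e : ℕ) : baxterD (p+e+3) (p+1) = ((detZ (p+e+3) (p+1) : ℤ) : ℚ) := by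
  have hp : (p.factorial : ℚ) ≠ 0 := by exact_mod_cast (Nat.factorial_pos p).ne'
  have he : (e.factorial : ℚ) ≠ 0 := by exact_mod_cast (Nat.factorial_pos e).ne'
  have c5 : ((p:ℚ)+1) ≠ 0 := by positivity
  have c6 : ((p:ℚ)+2) ≠ 0 := by positivity
  have d1 : ((e:ℚ)+1) ≠ 0 := by positivity
  have d2 : ((e:ℚ)+2) ≠ 0 := by positivity
  have d3 : ((e:ℚ)+3) ≠ 0 := by positivity
  have d4 : ((e:ℚ)+4) ≠ 0 := by positivity
  have c1 : ((p:ℚ)+(e:ℚ)+3) ≠ 0 := by positivity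
  have c2 : ((p:ℚ)+(e:ℚ)+4) ≠ 0 := by positivity
  set P : ℚ := (p : ℚ) with hP
  set E : ℚ := (e : ℚ) with hE
  set W : ℚ := ((p+e+2).factorial : ℚ) /
      (p.factorial * e.factorial * ((P+1)*(P+2)*(E+1)*(E+2)*(E+3)*(E+4))) with hW
  have E1 : ((p+e+2).choose p : ℚ) = W * ((P+1)*(P+2)*(E+3)*(E+4)) := by
    rw [Nat.cast_choose ℚ (by omega), show p+e+2-p = e+2 by omega, hW]
    push_cast [Nat.factorial_succ]
    field_simp; ring
  have E2 : ((p+e+2).choose (p+1) : ℚ) = W * ((P+2)*(E+2)*(E+3)*(E+4)) := by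
    rw [Nat.cast_choose ℚ (by omega), show p+e+2-(p+1) = e+1 by omega, hW]
    push_cast [Nat.factorial_succ]
    field_simp; ring
  have E3 : ((p+e+2).choose (p+1+1) : ℚ) = W * ((E+1)*(E+2)*(E+3)*(E+4)) := by
    rw [Nat.cast_choose ℚ (by omega), show p+e+2-(p+1+1) = e by omega, hW]
    push_cast [Nat.factorial_succ]
    field_simp; ring
  have E4 : ((p+e+3).choose p : ℚ) = W * ((P+E+3)*(P+1)*(P+2)*(E+4)) := by
    rw [Nat.cast_choose ℚ (by omega), show p+e+3-p = e+3 by omega, hW]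
    push_cast [Nat.factorial_succ]
    field_simp; ring
  have E5 : ((p+e+3).choose (p+1) : ℚ) = W * ((P+E+3)*(P+2)*(E+3)*(E+4)) := by
    rw [Nat.cast_choose ℚ (by omega), show p+e+3-(p+1) = e+2 by omega, hW]
    push_cast [Nat.factorial_succ]
    field_simp; ring
  have E6 : ((p+e+3).choose (p+1+1) : ℚ) = W * ((P+E+3)*(E+2)*(E+3)*(E+4)) := by
    rw [Nat.cast_choose ℚ (by omega), show p+e+3-(p+1+1) = e+1 by omega, hW]
    push_cast [Nat.factorial_succ]
    field_simp; ring
  have E7 : ((p+e+3+1).choose p : ℚ) = W * ((P+E+3)*(P+E+4)*(P+1)*(P+2)) := by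
    rw [Nat.cast_choose ℚ (by omega), show p+e+3+1-p = e+4 by omega, hW]
    push_cast [Nat.factorial_succ]
    field_simp; ring
  have E8 : ((p+e+3+1).choose (p+1) : ℚ) = W * ((P+E+3)*(P+E+4)*(P+2)*(E+4)) := by
    rw [Nat.cast_choose ℚ (by omega), show p+e+3+1-(p+1) = e+3 by omega, hW]
    push_cast [Nat.factorial_succ]
    field_simp; ring
  have E9 : ((p+e+3+1).choose (p+1+1) : ℚ) = W * ((P+E+3)*(P+E+4)*(E+3)*(E+4)) := by
    rw [Nat.cast_choose ℚ (by omega), show p+e+3+1-(p+1+1) = e+2 by omega, hW]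
    push_cast [Nat.factorial_succ]
    field_simp; ring
  unfold baxterD detZ
  rw [show p + 1 - 1 = p from rfl, show p + e + 3 - 1 = p + e + 2 from rfl]
  push_cast
  rw [E1, E2, E3, E4, E5, E6, E7, E8, E9]
  rw [div_mul_eq_mul_div, div_mul_eq_mul_div, div_mul_eq_mul_div, div_eq_iff (by positivity)]
  ring

lemma baxterD_eq_detZ (n k : ℕ) (hk1 : 1 ≤ k) (hkn : k ≤ n) :
    baxterD n k = ((detZ n k : ℤ) : ℚ) := by
  obtain ⟨p, rfl⟩ : ∃ p, k = p + 1 := ⟨k - 1, by omega⟩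
  obtain ⟨d, rfl⟩ : ∃ d, n = p + 1 + d := ⟨n - (p+1), by omega⟩
  match d with
  | 0 => exact keyA p
  | 1 => exact keyB p
  | (e+2) => rw [show p + 1 + (e + 2) = p + e + 3 by omega]; exact keyC p e

theorem baxterD_pos_integer (n k : ℕ) (hn : 1 ≤ n) (hk1 : 1 ≤ k) (hkn : k ≤ n) :
    ∃ m : ℕ, 0 < m ∧ baxterD n k = (m : ℚ) := by
  have hpos : 0 < baxterD n k := by
    unfold baxterD
    have h1 : 0 < ((n+1).choose (k-1) : ℚ) := by
      exact_mod_cast Nat.choose_pos (by omega)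
    have h2 : 0 < ((n+1).choose k : ℚ) := by
      exact_mod_cast Nat.choose_pos (by omega)
    have h3 : 0 < ((n+1).choose (k+1) : ℚ) := by
      exact_mod_cast Nat.choose_pos (by omega)
    have hn' : (0:ℚ) < n := by exact_mod_cast hn
    positivity
  have heq := baxterD_eq_detZ n k hk1 hkn
  have hdz : 0 < detZ n k := by
    have : (0:ℚ) < ((detZ n k : ℤ) : ℚ) := heq ▸ hpos
    exact_mod_cast this
  refine ⟨(detZ n k).toNat, by omega, ?_⟩
  rw [heq]
  rw [show (((detZ n k).toNat : ℕ) : ℚ) = (((detZ n k).toNat : ℤ) : ℚ) by push_cast; ring,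
      Int.toNat_of_nonneg hdz.le]
end

section
/- Let f(t) and g(t) be real polynomials with positive leading coefficients and only nonpositive real zeros. If the Hadamard product f*g is nonzero, then f*g has only nonpositive real zeros. -/
open Polynomial

/-- The Hadamard (coefficientwise) product of two real polynomials. -/
noncomputable def hadamard (f g : Polynomial ℝ) : Polynomial ℝ :=
  ∑ i ∈ Finset.range (min f.natDegree g.natDegree + 1),
    Polynomial.C (f.coeff i * g.coeff i) * Polynomial.X ^ i

/-- A real polynomial has only nonpositive real zeros: every complex root is a
real number ≤ 0. -/
def OnlyNonposZeros (f : Polynomial ℝ) : Prop :=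
  ∀ z : ℂ, (f.map (algebraMap ℝ ℂ)).IsRoot z → ∃ x : ℝ, x ≤ 0 ∧ z = (x : ℂ)

/-!
Suppose `(f * g)(z) = 0` with `z` off `(-∞, 0]`, and let `m = deg g`. Then `(f * g)(z)` is the
coefficient of `X ^ m` in `f(zX) · X^m g(1/X)`, a polynomial whose nonzero roots are the points
`r / z` and `1 / s` for the negative roots `r` of `f` and `s` of `g`. All of them lie in one open
half-plane `H` avoiding `0`. By Gauss–Lucas every derivative of a polynomial with roots in `H`
again has its roots in `H`; since the `k`-th coefficient vanishes only if the `k`-th derivative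
vanishes at `0`, no coefficient between the trailing degree and the degree can vanish. That `f * g ≠ 0` puts
`m` in this range.
-/

namespace Polynomial

theorem rootSet_mul_subset {p q : ℂ[X]} : (p * q).rootSet ℂ ⊆ p.rootSet ℂ ∪ q.rootSet ℂ := by
  intro w hw
  simp only [Set.mem_union, mem_rootSet, coe_aeval_eq_eval, eval_mul, mul_eq_zero] at hw ⊢
  obtain ⟨hpq, hp | hq⟩ := hw
  · exact .inl ⟨left_ne_zero_of_mul hpq, hp⟩
  · exact .inr ⟨right_ne_zero_of_mul hpq, hq⟩

section GaussLucas

variable {S : Set ℂ} {p : ℂ[X]}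

theorem rootSet_derivative_subset_of_convex (hS : Convex ℝ S) (hp : p.rootSet ℂ ⊆ S) :
    p.derivative.rootSet ℂ ⊆ S := by
  rcases lt_or_ge 0 p.degree with hdeg | hdeg
  · exact (rootSet_derivative_subset_convexHull_rootSet hdeg).trans (convexHull_min hp hS)
  · rw [derivative_of_natDegree_zero (natDegree_eq_zero_iff_degree_le_zero.mpr hdeg),
      rootSet_zero]
    exact Set.empty_subset S

theorem rootSet_iterate_derivative_subset_of_convex (hS : Convex ℝ S) (hp : p.rootSet ℂ ⊆ S)
    (k : ℕ) : (derivative^[k] p).rootSet ℂ ⊆ S := by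
  induction k with
  | zero => exact hp
  | succ k ih =>
    rw [Function.iterate_succ_apply']
    exact rootSet_derivative_subset_of_convex hS ih

theorem coeff_ne_zero_of_rootSet_subset_convex (hS : Convex ℝ S) (h0 : 0 ∉ S) (hp0 : p ≠ 0)
    (hp : p.rootSet ℂ ⊆ S) {k : ℕ} (hk : k ≤ p.natDegree) : p.coeff k ≠ 0 := by
  intro hpk
  have hder : derivative^[k] p ≠ 0 := by
    intro h
    have hlead := congrArg (coeff · (p.natDegree - k)) h
    simp only [coeff_iterate_derivative, Nat.sub_add_cancel hk, coeff_natDegree, nsmul_eq_mul,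
      coeff_zero, mul_eq_zero, Nat.cast_eq_zero, Nat.descFactorial_eq_zero_iff_lt,
      leadingCoeff_eq_zero, hp0, or_false] at hlead
    omega
  refine h0 (rootSet_iterate_derivative_subset_of_convex hS hp k (mem_rootSet.mpr ⟨hder, ?_⟩))
  rw [← coeff_zero_eq_aeval_zero, coeff_iterate_derivative, zero_add, hpk, smul_zero]

theorem coeff_ne_zero_of_rootSet_subset_insert_zero (hS : Convex ℝ S) (h0 : 0 ∉ S)
    (hp0 : p ≠ 0) (hp : p.rootSet ℂ ⊆ insert 0 S) {k : ℕ} (hk₁ : p.natTrailingDegree ≤ k)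
    (hk₂ : k ≤ p.natDegree) : p.coeff k ≠ 0 := by
  set t := p.natTrailingDegree
  obtain ⟨q, hpq⟩ : X ^ t ∣ p :=
    X_pow_dvd_iff.mpr fun d hd => coeff_eq_zero_of_lt_natTrailingDegree hd
  have hq0 : q ≠ 0 := right_ne_zero_of_mul (hpq ▸ hp0)
  have hq : q.coeff 0 ≠ 0 := by
    have : p.coeff t ≠ 0 := trailingCoeff_nonzero_iff_nonzero.mpr hp0
    rwa [hpq, coeff_X_pow_mul', if_pos le_rfl, Nat.sub_self] at this
  have hqroots : q.rootSet ℂ ⊆ S := by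
    intro w hw
    rw [mem_rootSet, coe_aeval_eq_eval] at hw
    have hw0 : w ≠ 0 := by
      rintro rfl
      exact hq (by rw [coeff_zero_eq_eval_zero]; exact hw.2)
    have hwp : w ∈ p.rootSet ℂ := by
      rw [mem_rootSet, coe_aeval_eq_eval]
      exact ⟨hp0, by rw [hpq, eval_mul, hw.2, mul_zero]⟩
    exact (hp hwp).resolve_left hw0
  have hdeg : p.natDegree = t + q.natDegree := by
    rw [hpq, natDegree_mul (pow_ne_zero _ X_ne_zero) hq0, natDegree_X_pow]
  rw [hpq, coeff_X_pow_mul', if_pos hk₁]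
  exact coeff_ne_zero_of_rootSet_subset_convex hS h0 hq0 hqroots (by omega)

theorem coeff_mul_ne_zero_of_rootSet_subset_insert_zero (hS : Convex ℝ S) (h0 : 0 ∉ S)
    {q : ℂ[X]} (hp : p.rootSet ℂ ⊆ insert 0 S) (hq : q.rootSet ℂ ⊆ insert 0 S) {i j : ℕ}
    (hi : p.coeff i ≠ 0) (hj : q.coeff j ≠ 0) : (p * q).coeff (i + j) ≠ 0 := by
  have hp0 : p ≠ 0 := by rintro rfl; exact hi (coeff_zero i)
  have hq0 : q ≠ 0 := by rintro rfl; exact hj (coeff_zero j)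
  refine coeff_ne_zero_of_rootSet_subset_insert_zero hS h0 (mul_ne_zero hp0 hq0)
    (rootSet_mul_subset.trans (Set.union_subset hp hq)) ?_ ?_
  · rw [natTrailingDegree_mul hp0 hq0]
    exact add_le_add (natTrailingDegree_le_of_ne_zero hi) (natTrailingDegree_le_of_ne_zero hj)
  · rw [natDegree_mul hp0 hq0]
    exact add_le_add (le_natDegree_of_ne_zero hi) (le_natDegree_of_ne_zero hj)

end GaussLucas

theorem coeff_mul_reverse {R : Type*} [Semiring R] (p q : R[X]) :
    (p * q.reverse).coeff q.natDegree =
      ∑ i ∈ Finset.range (q.natDegree + 1), p.coeff i * q.coeff i := by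
  rw [coeff_mul, Finset.Nat.sum_antidiagonal_eq_sum_range_succ_mk]
  refine Finset.sum_congr rfl fun i hi => ?_
  rw [coeff_reverse, revAt_le (Nat.sub_le _ _), Nat.sub_sub_self (Finset.mem_range_succ_iff.mp hi)]

end Polynomial

namespace Complex

theorem exists_re_pos_and_re_mul_inv_pos {z : ℂ} (hz : z ∈ slitPlane) :
    ∃ d : ℂ, 0 < d.re ∧ 0 < (d * z⁻¹).re := by
  have hpos : 0 < ‖z‖ + z.re := by
    rcases mem_slitPlane_iff.mp hz with hre | him
    · linarith [norm_nonneg z]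
    · linarith [neg_abs_le z.re, abs_re_lt_norm.mpr him]
  have hnorm : 0 < ‖z‖ := norm_pos_iff.mpr (slitPlane_ne_zero hz)
  -- `‖z‖ + z` bisects the angle between `1` and `z`, which is less than `π`.
  refine ⟨‖z‖ + z, by simpa using hpos, ?_⟩
  have hre : ((‖z‖ + z) * z⁻¹).re = (‖z‖ + z.re) / ‖z‖ := by
    simp only [mul_re, inv_re, inv_im, add_re, add_im, ofReal_re, ofReal_im, normSq_eq_norm_sq]
    field_simp
    linear_combination -(sq_norm_sub_sq_re z)
  rw [hre]
  exact div_pos hpos hnorm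

theorem exists_convex_zero_notMem_of_mem_slitPlane {z : ℂ} (hz : z ∈ slitPlane) :
    ∃ S : Set ℂ, Convex ℝ S ∧ 0 ∉ S ∧ ofReal '' Set.Iio 0 ⊆ S ∧
      (fun r : ℝ => r * z⁻¹) '' Set.Iio 0 ⊆ S := by
  obtain ⟨d, hd, hdz⟩ := exists_re_pos_and_re_mul_inv_pos hz
  refine ⟨{w | (d * w).re < 0}, ?_, by simp, ?_, ?_⟩
  · refine convex_halfSpace_lt ⟨fun x y => by simp [mul_add], fun c x => ?_⟩ 0
    rw [real_smul, mul_left_comm, re_ofReal_mul, smul_eq_mul]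
  · rintro _ ⟨r, hr, rfl⟩
    exact (re_mul_ofReal d r).trans_lt (mul_neg_of_pos_of_neg hd hr)
  · rintro _ ⟨r, hr, rfl⟩
    rw [Set.mem_ofPred_eq, mul_left_comm, re_ofReal_mul]
    exact mul_neg_of_neg_of_pos hr hdz

end Complex

theorem eval_map_hadamard (f g : ℝ[X]) (z : ℂ) :
    ((hadamard f g).map (algebraMap ℝ ℂ)).eval z =
      ((f.map (algebraMap ℝ ℂ)).comp (C z * X) * (g.map (algebraMap ℝ ℂ)).reverse).coeff
        g.natDegree := by
  rw [← natDegree_map (algebraMap ℝ ℂ) (p := g), coeff_mul_reverse, natDegree_map, hadamard,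
    Polynomial.map_sum, eval_finsetSum]
  refine (Finset.sum_subset (Finset.range_subset_range.mpr (by omega)) ?_).trans
    (Finset.sum_congr rfl fun i _ => ?_)
  · intro i hi hi'
    simp only [Finset.mem_range] at hi hi'
    rw [coeff_eq_zero_of_natDegree_lt (by omega : f.natDegree < i)]
    simp
  · simp only [Polynomial.map_mul, map_C, Polynomial.map_pow, map_X, eval_mul, eval_C, eval_pow,
      eval_X, comp_C_mul_X_coeff, coeff_map, map_mul]
    ring

theorem exists_coeff_ne_zero_of_hadamard_ne_zero {f g : ℝ[X]} (h : hadamard f g ≠ 0) :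
    ∃ k, f.coeff k ≠ 0 ∧ g.coeff k ≠ 0 := by
  by_contra! hfg
  exact h (Finset.sum_eq_zero fun i _ => by
    rw [mul_eq_zero.mpr ((em (f.coeff i = 0)).imp_right (hfg i)), C_0, zero_mul])

namespace OnlyNonposZeros

variable {f : ℝ[X]}

theorem exists_neg_eq_of_isRoot (hf : OnlyNonposZeros f) {w : ℂ}
    (hw : (f.map (algebraMap ℝ ℂ)).IsRoot w) (hw0 : w ≠ 0) : ∃ r : ℝ, r < 0 ∧ (r : ℂ) = w := by
  obtain ⟨r, hr, rfl⟩ := hf w hw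
  exact ⟨r, hr.lt_of_ne (by rintro rfl; simp at hw0), rfl⟩

theorem rootSet_comp_C_mul_X_subset (hf : OnlyNonposZeros f) {z : ℂ} (hz : z ≠ 0) :
    ((f.map (algebraMap ℝ ℂ)).comp (C z * X)).rootSet ℂ ⊆
      insert 0 ((fun r : ℝ => r * z⁻¹) '' Set.Iio 0) := by
  intro w hw
  rw [mem_rootSet, coe_aeval_eq_eval, eval_comp] at hw
  rcases eq_or_ne w 0 with rfl | hw0
  · exact Set.mem_insert _ _
  obtain ⟨r, hr, hzw⟩ := hf.exists_neg_eq_of_isRoot (w := z * w) (by simpa using hw.2)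
    (mul_ne_zero hz hw0)
  exact Or.inr ⟨r, hr, show (r : ℂ) * z⁻¹ = w by rw [hzw]; field_simp⟩

theorem rootSet_reverse_subset (hf : OnlyNonposZeros f) :
    (f.map (algebraMap ℝ ℂ)).reverse.rootSet ℂ ⊆ insert 0 (Complex.ofReal '' Set.Iio 0) := by
  intro w hw
  rw [mem_rootSet, coe_aeval_eq_eval] at hw
  rcases eq_or_ne w 0 with rfl | hw0
  · exact Set.mem_insert _ _
  let := invertibleOfNonzero (inv_ne_zero hw0)
  have hroot : (f.map (algebraMap ℝ ℂ)).IsRoot w⁻¹ :=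
    (eval₂_reverse_eq_zero_iff (RingHom.id ℂ) w⁻¹ _).mp (by rw [invOf_eq_inv, inv_inv]; exact hw.2)
  obtain ⟨r, hr, hrw⟩ := hf.exists_neg_eq_of_isRoot hroot (inv_ne_zero hw0)
  exact Or.inr ⟨r⁻¹, inv_lt_zero.mpr hr, by rw [Complex.ofReal_inv, hrw, inv_inv]⟩

end OnlyNonposZeros

theorem hadamard_only_nonpos_zeros_general (f g : Polynomial ℝ)
    (hf : OnlyNonposZeros f) (hg : OnlyNonposZeros g)
    (hne : hadamard f g ≠ 0) :
    OnlyNonposZeros (hadamard f g) := by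
  intro z hz
  by_contra hz_nonpos
  have hz_slit : z ∈ Complex.slitPlane := by
    rw [Complex.mem_slitPlane_iff]
    by_contra! h
    exact hz_nonpos ⟨z.re, h.1, Complex.ext rfl (by simpa using h.2)⟩
  have hz0 : z ≠ 0 := Complex.slitPlane_ne_zero hz_slit
  obtain ⟨S, hS, hS0, hneg, hray⟩ := Complex.exists_convex_zero_notMem_of_mem_slitPlane hz_slit
  obtain ⟨k, hfk, hgk⟩ := exists_coeff_ne_zero_of_hadamard_ne_zero hne
  have hkg : k ≤ g.natDegree := le_natDegree_of_ne_zero hgk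
  refine coeff_mul_ne_zero_of_rootSet_subset_insert_zero hS hS0
    ((hf.rootSet_comp_C_mul_X_subset hz0).trans (Set.insert_subset_insert hray))
    (hg.rootSet_reverse_subset.trans (Set.insert_subset_insert hneg))
    (i := k) (j := g.natDegree - k) (by simp [hfk, hz0]) ?_ ?_
  · rwa [coeff_reverse, natDegree_map, revAt_le (Nat.sub_le _ _), Nat.sub_sub_self hkg,
      coeff_map, Complex.coe_algebraMap, Complex.ofReal_ne_zero]
  · rw [Nat.add_sub_cancel' hkg, ← eval_map_hadamard]
    exact hz

theorem hadamard_only_nonpos_zeros (f g : Polynomial ℝ)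
    (hf0 : 0 < f.leadingCoeff) (hg0 : 0 < g.leadingCoeff)
    (hf : OnlyNonposZeros f) (hg : OnlyNonposZeros g)
    (hne : hadamard f g ≠ 0) :
    OnlyNonposZeros (hadamard f g) :=
  hadamard_only_nonpos_zeros_general f g hf hg hne
end

section
/- For every n ≥ 2, the Narayana-type polynomial F_{n,2}(t) = Σ_{k=0}^{n-1} C(n,k) C(n,k+1) t^k has only real zeros, all of which are negative. -/
/-!
Under the substitution `t = x / (1 + x)`, the polynomial `x (1 + x)ⁿ F(t)` (with `F = F_{n,2}`) is,
by the Leibniz rule, `D^{n-1}(xⁿ (1 + x)ⁿ) / (n - 1)!`. Since `xⁿ (1 + x)ⁿ` has only real roots,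
Rolle's theorem shows that so does this derivative; pulling back along the Möbius map, every
complex root of `F` is real, and it is negative because `F` has positive coefficients.
-/

open Polynomial Finset

/-- The Narayana-type polynomial `F n 2 (t) = ∑_{k=0}^{n-1} C(n,k) C(n,k+1) t^k`. -/
noncomputable def narayanaPoly (n : ℕ) : Polynomial ℝ :=
  ∑ k ∈ Finset.range n,
    Polynomial.C ((n.choose k : ℝ) * (n.choose (k + 1) : ℝ)) * Polynomial.X ^ k

open scoped Nat

namespace Polynomial

theorem Splits.derivative {p : ℝ[X]} (hp : p.Splits) : (derivative p).Splits := by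
  rw [splits_iff_card_roots] at hp ⊢
  have := card_roots_le_derivative p
  have := card_roots' (Polynomial.derivative p)
  have := natDegree_derivative_le p
  omega

theorem Splits.iterate_derivative {p : ℝ[X]} (hp : p.Splits) (m : ℕ) :
    (Polynomial.derivative^[m] p).Splits := by
  induction m with
  | zero => exact hp
  | succ m ih => rw [Function.iterate_succ_apply']; exact ih.derivative

end Polynomial

theorem Nat.choose_mul_descFactorial_mul_descFactorial {n j : ℕ} (h : j < n) :
    (n - 1).choose j * n.descFactorial (n - 1 - j) * n.descFactorial j =
      (n - 1)! * (n.choose j * n.choose (j + 1)) := by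
  rw [Nat.descFactorial_eq_factorial_mul_choose, Nat.descFactorial_eq_factorial_mul_choose,
    Nat.choose_symm_of_eq_add (show n = n - 1 - j + (j + 1) by omega),
    ← Nat.choose_mul_factorial_mul_factorial (show j ≤ n - 1 by omega)]
  ring

/-- `X (X + 1)ⁿ F(X / (X + 1))` for `F = narayanaPoly n`. -/
noncomputable def narayanaMobius (n : ℕ) : ℝ[X] :=
  ∑ k ∈ range n, C ((n.choose k : ℝ) * n.choose (k + 1)) * (X ^ (k + 1) * (X + 1) ^ (n - k))

theorem iterate_derivative_X_pow_mul_X_add_one_pow {n : ℕ} (hn : 0 < n) :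
    derivative^[n - 1] (X ^ n * (X + 1) ^ n : ℝ[X]) = C ((n - 1)! : ℝ) * narayanaMobius n := by
  rw [← C_1, iterate_derivative_mul, Nat.succ_eq_add_one, Nat.sub_add_cancel hn, narayanaMobius,
    mul_sum]
  refine sum_congr rfl fun j hj => ?_
  have hj : j < n := mem_range.mp hj
  rw [iterate_derivative_X_pow_eq_C_mul, iterate_derivative_X_add_pow,
    show n - (n - 1 - j) = j + 1 by omega, C_1, nsmul_eq_mul, nsmul_eq_mul, ← C_eq_natCast,
    ← C_eq_natCast]
  have key := congrArg (fun m : ℕ => C (m : ℝ)) (Nat.choose_mul_descFactorial_mul_descFactorial hj)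
  simp only [Nat.cast_mul, C_mul] at key
  rw [C_mul]
  linear_combination (X ^ (j + 1) * (X + 1) ^ (n - j)) * key

theorem narayanaMobius_eval_div_one_sub {K : Type*} [Field K] [Algebra ℝ K] (n : ℕ) {z : K}
    (hz : 1 - z ≠ 0) :
    ((narayanaMobius n).map (algebraMap ℝ K)).eval (z / (1 - z)) =
      z / (1 - z) ^ (n + 1) * ((narayanaPoly n).map (algebraMap ℝ K)).eval z := by
  simp only [narayanaMobius, narayanaPoly, Polynomial.map_sum, eval_finsetSum, mul_sum]
  refine sum_congr rfl fun k hk => ?_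
  have hk : k < n := mem_range.mp hk
  have h1 : z / (1 - z) + 1 = (1 - z)⁻¹ := by field_simp; ring
  simp only [Polynomial.map_mul, Polynomial.map_pow, map_C, map_X, Polynomial.map_add,
    Polynomial.map_one, eval_mul, eval_pow, eval_C, eval_X, eval_add, eval_one, h1]
  rw [div_eq_mul_inv, div_eq_mul_inv, ← inv_pow, show n + 1 = (k + 1) + (n - k) by omega]
  ring

theorem narayanaPoly_eval_pos {n : ℕ} (hn : 0 < n) {x : ℝ} (hx : 0 ≤ x) :
    0 < (narayanaPoly n).eval x := by
  rw [narayanaPoly, eval_finsetSum]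
  refine sum_pos' (fun k _ => by simp only [eval_mul, eval_C, eval_pow, eval_X]; positivity)
    ⟨0, mem_range.mpr hn, ?_⟩
  simp [hn]

theorem narayanaMobius_ne_zero {n : ℕ} (hn : 0 < n) : narayanaMobius n ≠ 0 := by
  intro h
  have := narayanaMobius_eval_div_one_sub (K := ℝ) n (z := 1 / 2) (by norm_num)
  rw [h, Polynomial.map_zero, eval_zero, Algebra.algebraMap_self, map_id] at this
  have hpos := narayanaPoly_eval_pos hn (x := 1 / 2) (by norm_num)
  exact (mul_pos (by norm_num) hpos).ne this

theorem splits_narayanaMobius {n : ℕ} (hn : 0 < n) : (narayanaMobius n).Splits := by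
  have h := ((Splits.X_pow n).mul ((Splits.X_add_C (1 : ℝ)).pow n)).iterate_derivative (n - 1)
  rw [C_1, iterate_derivative_X_pow_mul_X_add_one_pow hn] at h
  refine h.of_dvd ?_ (dvd_mul_left _ _)
  exact mul_ne_zero (C_ne_zero.mpr (by positivity)) (narayanaMobius_ne_zero hn)

theorem narayanaPoly_neg_real_rooted (n : ℕ) (hn : 2 ≤ n) :
    ∀ z : ℂ, ((narayanaPoly n).map (algebraMap ℝ ℂ)).IsRoot z →
      ∃ x : ℝ, x < 0 ∧ z = (x : ℂ) := by
  have hn0 : 0 < n := by omega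
  intro z hz
  obtain ⟨x, rfl⟩ : ∃ x : ℝ, (x : ℂ) = z := by
    by_cases hz1 : z = 1
    · exact ⟨1, by simp [hz1]⟩
    have h1z : 1 - z ≠ 0 := sub_ne_zero.mpr (Ne.symm hz1)
    have hw : ((narayanaMobius n).map (algebraMap ℝ ℂ)).IsRoot (z / (1 - z)) := by
      rw [IsRoot, narayanaMobius_eval_div_one_sub n h1z, hz.eq_zero, mul_zero]
    obtain ⟨w, hw⟩ := (splits_narayanaMobius hn0).mem_range_of_isRoot
      (narayanaMobius_ne_zero hn0) hw
    rw [Complex.coe_algebraMap, eq_div_iff h1z] at hw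
    have h1w : (1 + w : ℂ) ≠ 0 := fun h => by
      have hw0 : (w : ℂ) = 0 := by linear_combination hw + z * h
      simp [hw0] at h
    exact ⟨w / (1 + w), by push_cast; field_simp; linear_combination hw⟩
  refine ⟨x, lt_of_not_ge fun hx => (narayanaPoly_eval_pos hn0 hx).ne' ?_, rfl⟩
  rwa [IsRoot, eval_map_algebraMap, ← Complex.coe_algebraMap,
    aeval_algebraMap_apply_eq_algebraMap_eval, map_eq_zero_iff _ (algebraMap ℝ ℂ).injective] at hz
end
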